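/- Let K be the algebraic closure of the field ℚ(T) of rational functions in one variable over ℚ, and let T denote the image in K of the rational-function variable. Then the polynomial x^4 + y^4 + 1 + T·(x^4 + xy^3 + y + 1), regarded as a polynomial in the two variables x, y over K, is irreducible; that is, the curve Y : q(T,x,y) = 0 is geometrically integral over ℚ(T). -/

import Mathlib

/-!
As a polynomial in `y` over `K[x]`, `q = y⁴ + (t x) y³ + t y + (1 + t)(x⁴ + 1)` is monic of
degree 4, so a factorization produces either a root `y = p(x)` or a product of two monic
quadratics `(y² + p y + r)(y² + s y + w)`. Comparing degrees in `x` forces `p` to be linear,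
resp. `p, s` to be linear and `r, w` quadratic; comparing coefficients then yields finitely many
polynomial equations in the coefficients and `t`, and eliminating the unknowns shows that they
have no solution once `t ≠ 0`, `t ≠ -1` and the characteristic is zero.
-/

namespace Polynomial

section Semiring

variable {R : Type*} [Semiring R]

lemma coeffs_eq_zero_of_quartic_eq_zero {c₄ c₃ c₂ c₁ c₀ : R}
    (h : C c₄ * X ^ 4 + C c₃ * X ^ 3 + C c₂ * X ^ 2 + C c₁ * X + C c₀ = 0) :
    c₄ = 0 ∧ c₃ = 0 ∧ c₂ = 0 ∧ c₁ = 0 ∧ c₀ = 0 := by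
  have h := fun n => congrArg (coeff · n) h
  exact ⟨by simpa using h 4, by simpa using h 3, by simpa using h 2, by simpa using h 1,
    by simpa using h 0⟩

lemma eq_C_mul_X_sq_add_C_mul_X_add_C_of_natDegree_le_two {p : R[X]} (h : p.natDegree ≤ 2) :
    p = C (p.coeff 2) * X ^ 2 + C (p.coeff 1) * X + C (p.coeff 0) := by
  ext (_ | _ | _ | n)
  · simp
  · simp
  · simp
  · rw [coeff_eq_zero_of_natDegree_lt (by omega)]
    simp

lemma Monic.eq_X_sq_add_C_mul_X_add_C {p : R[X]} (hp : p.Monic) (hd : p.natDegree = 2) :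
    p = X ^ 2 + C (p.coeff 1) * X + C (p.coeff 0) := by
  have h₂ : p.coeff 2 = 1 := hd ▸ hp.coeff_natDegree
  conv_lhs => rw [eq_C_mul_X_sq_add_C_mul_X_add_C_of_natDegree_le_two hd.le, h₂, C_1, one_mul]

end Semiring

variable {R : Type*} [CommRing R] [IsDomain R]

theorem irreducible_X_pow_four_add {c₃ c₂ c₁ c₀ : R}
    (hroot : ∀ a, a ^ 4 + c₃ * a ^ 3 + c₂ * a ^ 2 + c₁ * a + c₀ ≠ 0)
    (hquad : ∀ p r s w, p + s = c₃ → r + w + p * s = c₂ → p * w + r * s = c₁ → r * w ≠ c₀) :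
    Irreducible (X ^ 4 + C c₃ * X ^ 3 + C c₂ * X ^ 2 + C c₁ * X + C c₀ : R[X]) := by
  have hm : (X ^ 4 + C c₃ * X ^ 3 + C c₂ * X ^ 2 + C c₁ * X + C c₀ : R[X]).Monic := by
    monicity!
  have hd : (X ^ 4 + C c₃ * X ^ 3 + C c₂ * X ^ 2 + C c₁ * X + C c₀ : R[X]).natDegree = 4 := by
    compute_degree!
  rw [hm.irreducible_iff_natDegree', hd]
  refine ⟨fun h => by simp [h] at hd, fun f g hf hg hfg hg_deg => ?_⟩
  simp only [Finset.mem_Ioc] at hg_deg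
  obtain hg1 | hg2 : g.natDegree = 1 ∨ g.natDegree = 2 := by omega
  · refine hroot (-g.coeff 0) ?_
    have := congrArg (eval (-g.coeff 0)) hfg
    rw [hg.eq_X_add_C hg1] at this
    simpa using this.symm
  · have hf2 : f.natDegree = 2 := by
      have := hf.natDegree_mul hg
      rw [hfg, hd] at this
      omega
    rw [hf.eq_X_sq_add_C_mul_X_add_C hf2, hg.eq_X_sq_add_C_mul_X_add_C hg2] at hfg
    set p := f.coeff 1
    set r := f.coeff 0
    set s := g.coeff 1
    set w := g.coeff 0
    have h : C 0 * X ^ 4 + C (p + s - c₃) * X ^ 3 + C (r + w + p * s - c₂) * X ^ 2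
        + C (p * w + r * s - c₁) * X + C (r * w - c₀) = 0 := by
      simp only [map_sub, map_add, map_mul, map_zero]
      linear_combination hfg
    obtain ⟨-, h₃, h₂, h₁, h₀⟩ := coeffs_eq_zero_of_quartic_eq_zero h
    exact hquad p r s w (sub_eq_zero.1 h₃) (sub_eq_zero.1 h₂) (sub_eq_zero.1 h₁) (sub_eq_zero.1 h₀)

end Polynomial

namespace QuarticPencil

open Polynomial

variable {K : Type*} [Field K] {t : K}

theorem natDegree_le_one_of_root {p : K[X]}
    (h : p ^ 4 + C t * X * p ^ 3 + C t * p + C (1 + t) * (X ^ 4 + 1) = 0) : p.natDegree ≤ 1 := by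
  by_contra! hp
  have hlow :
      (C t * X * p ^ 3 + C t * p + C (1 + t) * (X ^ 4 + 1)).natDegree < (p ^ 4).natDegree := by
    rw [natDegree_pow]
    refine lt_of_le_of_lt (b := max (1 + 3 * p.natDegree) 4) (by compute_degree; omega) ?_
    omega
  have := natDegree_add_eq_left_of_natDegree_lt hlow
  rw [← add_assoc, ← add_assoc, h, natDegree_zero, natDegree_pow] at this
  omega

theorem natDegree_le_of_factor (ht1 : 1 + t ≠ 0) {p r w : K[X]}
    (h₂ : r + w + p * (C t * X - p) = 0) (h₁ : p * w + r * (C t * X - p) = C t)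
    (h₀ : r * w = C (1 + t) * (X ^ 4 + 1)) :
    p.natDegree ≤ 1 ∧ r.natDegree ≤ 2 ∧ w.natDegree ≤ 2 := by
  have hdeg : (C (1 + t) * (X ^ 4 + 1) : K[X]).natDegree = 4 := by compute_degree!
  have hne : r * w ≠ 0 := by
    rw [h₀]
    exact ne_zero_of_natDegree_gt (n := 0) (by omega)
  have hr := left_ne_zero_of_mul hne
  have hw := right_ne_zero_of_mul hne
  have hrw : r.natDegree + w.natDegree = 4 := by rw [← natDegree_mul hr hw, h₀, hdeg]
  have hsum : r + w = -(p * (C t * X - p)) := eq_neg_of_add_eq_zero_left h₂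
  have hp : p.natDegree ≤ 1 := by
    by_contra! hp
    have hs : (C t * X - p).natDegree = p.natDegree :=
      natDegree_sub_eq_right_of_natDegree_lt (by compute_degree; omega)
    have hp0 : p ≠ 0 := by rintro rfl; simp at hp
    have hs0 : C t * X - p ≠ 0 := by intro h; simp [h] at hs; omega
    have hrw_max := natDegree_add_le r w
    rw [hsum, natDegree_neg, natDegree_mul hp0 hs0, hs] at hrw_max
    have h₁' := congrArg natDegree h₁
    rw [natDegree_C] at h₁'
    rcases le_max_iff.1 hrw_max with hr4 | hw4
    · rw [natDegree_add_eq_right_of_natDegree_lt, natDegree_mul hr hs0] at h₁'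
      · omega
      · rw [natDegree_mul hr hs0]
        exact natDegree_mul_le.trans_lt (by omega)
    · rw [natDegree_add_eq_left_of_natDegree_lt, natDegree_mul hp0 hw] at h₁'
      · omega
      · rw [natDegree_mul hp0 hw]
        exact natDegree_mul_le.trans_lt (by omega)
  have hsum_le : (r + w).natDegree ≤ 2 := by
    rw [hsum, natDegree_neg]
    have hs : (C t * X - p).natDegree ≤ 1 := by compute_degree; omega
    exact natDegree_mul_le.trans (Nat.add_le_add hp hs)
  have hle : ∀ {u v : K[X]}, u.natDegree + v.natDegree = 4 → (u + v).natDegree ≤ 2 →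
      u.natDegree ≤ 2 := fun huv h => by
    by_contra! hu
    rw [natDegree_add_eq_left_of_natDegree_lt (by omega)] at h
    omega
  exact ⟨hp, hle hrw hsum_le, hle (by omega) (add_comm r w ▸ hsum_le)⟩

variable [CharZero K]

theorem false_of_root_equations (ht0 : t ≠ 0) (ht1 : 1 + t ≠ 0) {a b : K}
    (h₄ : a ^ 4 + t * a ^ 3 + 1 + t = 0) (h₃ : 4 * a ^ 3 * b + 3 * t * a ^ 2 * b = 0)
    (h₂ : 6 * a ^ 2 * b ^ 2 + 3 * t * a * b ^ 2 = 0) (h₁ : 4 * a * b ^ 3 + t * b ^ 3 + t * a = 0) :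
    False := by
  rcases eq_or_ne a 0 with rfl | ha
  · exact ht1 (by linear_combination h₄)
  rcases eq_or_ne b 0 with rfl | hb
  · exact mul_ne_zero ht0 ha (by linear_combination h₁)
  have h₂' : 2 * a + t = 0 := by
    have : 3 * a * b ^ 2 * (2 * a + t) = 0 := by linear_combination h₂
    simpa [ha, hb] using this
  have h₃' : 4 * a + 3 * t = 0 := by
    have : a ^ 2 * b * (4 * a + 3 * t) = 0 := by linear_combination h₃
    simpa [ha, hb] using this
  exact ht0 (by linear_combination h₃' - 2 * h₂')

theorem root_ne_zero (ht0 : t ≠ 0) (ht1 : 1 + t ≠ 0) (p : K[X]) :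
    p ^ 4 + C t * X * p ^ 3 + C t * p + C (1 + t) * (X ^ 4 + 1) ≠ 0 := by
  intro h
  obtain ⟨a, b, rfl⟩ := exists_eq_X_add_C_of_natDegree_le_one (natDegree_le_one_of_root h)
  have hc : C (a ^ 4 + t * a ^ 3 + 1 + t) * X ^ 4 + C (4 * a ^ 3 * b + 3 * t * a ^ 2 * b) * X ^ 3
      + C (6 * a ^ 2 * b ^ 2 + 3 * t * a * b ^ 2) * X ^ 2
      + C (4 * a * b ^ 3 + t * b ^ 3 + t * a) * X + C (b ^ 4 + t * b + 1 + t) = 0 := by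
    simp only [map_add, map_mul, map_pow, map_one, map_ofNat] at h ⊢
    linear_combination h
  obtain ⟨h₄, h₃, h₂, h₁, -⟩ := coeffs_eq_zero_of_quartic_eq_zero hc
  exact false_of_root_equations ht0 ht1 h₄ h₃ h₂ h₁

/- `hᵢⱼ` is the coefficient of `xʲ` in the `i`-th equation for a factorization
`(y² + p y + r)(y² + s y + w)` with `p = a x + b`, `s = t x - p`, `r = r₂ x² + r₁ x + r₀` and
`w = w₂ x² + w₁ x + w₀`. -/
theorem false_of_factor_equations (ht0 : t ≠ 0) (ht1 : 1 + t ≠ 0)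
    {a b r₂ r₁ r₀ w₂ w₁ w₀ : K}
    (h₂₂ : r₂ + w₂ + a * (t - a) = 0) (h₂₁ : r₁ + w₁ - a * b + b * (t - a) = 0)
    (h₂₀ : r₀ + w₀ - b ^ 2 = 0)
    (h₁₃ : a * w₂ + r₂ * (t - a) = 0) (h₁₁ : a * w₀ + b * w₁ + r₀ * (t - a) - r₁ * b = 0)
    (h₁₀ : b * w₀ - r₀ * b - t = 0)
    (h₀₄ : r₂ * w₂ - (1 + t) = 0) (h₀₃ : r₂ * w₁ + r₁ * w₂ = 0) (h₀₁ : r₁ * w₀ + r₀ * w₁ = 0)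
    (h₀₀ : r₀ * w₀ - (1 + t) = 0) : False := by
  have hb : b ≠ 0 := by
    rintro rfl
    exact ht0 (by linear_combination -h₁₀)
  -- The constant terms fix `r₀, w₀` in terms of `b`; eliminating `r₁` then leaves relations
  -- `hH`, `hJ` in `a, b, t` alone.
  have hr₀ : 2 * b * r₀ - b ^ 3 + t = 0 := by linear_combination b * h₂₀ - h₁₀
  have hw₀ : 2 * b * w₀ - b ^ 3 - t = 0 := by linear_combination b * h₂₀ + h₁₀
  have hH : b ^ 6 - 4 * (1 + t) * b ^ 2 - t ^ 2 = 0 := by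
    linear_combination (-(b ^ 3 + t)) * hr₀ - 2 * b * r₀ * hw₀ + 4 * b ^ 2 * h₀₀
  have hG : 2 * t * r₁ - b * (t - 2 * a) * (b ^ 3 - t) = 0 := by
    linear_combination 2 * b * h₀₁ - r₁ * hw₀ - w₁ * hr₀ - (b ^ 3 - t) * h₂₁
  have hC : 4 * b ^ 2 * r₁ - (2 * a * t - t ^ 2 + b ^ 3 * (4 * a - t)) = 0 := by
    linear_combination a * hw₀ + (t - a) * hr₀ + 2 * b ^ 2 * h₂₁ - 2 * b * h₁₁
  have hJ : t ^ 2 * b ^ 3 - (t - 2 * a) * (8 * (1 + t) * b ^ 2 + 3 * t ^ 2) = 0 := by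
    linear_combination (-t) * hC + 2 * b ^ 2 * hG + 2 * (t - 2 * a) * hH
  have h2a : t - 2 * a ≠ 0 := by
    intro h2a
    have : t ^ 2 * b ^ 3 = 0 := by
      linear_combination hJ + (8 * (1 + t) * b ^ 2 + 3 * t ^ 2) * h2a
    simp [ht0, hb] at this
  have hr₂ : r₂ * (t - 2 * a) - a ^ 2 * (t - a) = 0 := by linear_combination h₁₃ - a * h₂₂
  have hr₂0 : r₂ ≠ 0 := by
    rintro rfl
    exact ht1 (by linear_combination -h₀₄)
  have hKey : a * (t - a) * (t * r₁ + a * b * (t - 2 * a)) = 0 := by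
    linear_combination (-(t - 2 * a)) * (h₀₃ - r₂ * h₂₁ - r₁ * h₂₂) -
      (2 * r₁ + b * (t - 2 * a)) * hr₂
  rcases mul_eq_zero.1 hKey with h | hL
  · rcases mul_eq_zero.1 h with ha | hta
    · have : r₂ * t = 0 := by linear_combination hr₂ + (2 * r₂ + a * t - a ^ 2) * ha
      simp [hr₂0, ht0] at this
    · have : r₂ * (t - 2 * a) = 0 := by linear_combination hr₂ + a ^ 2 * hta
      simp [hr₂0, h2a] at this
  · have hM : b ^ 3 - t + 2 * a = 0 := by
      have : b * (t - 2 * a) * (b ^ 3 - t + 2 * a) = 0 := by linear_combination 2 * hL - hG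
      simpa [hb, h2a] using this
    have hN : 8 * (1 + t) * b ^ 2 + 2 * t ^ 2 = 0 := by
      have : (t - 2 * a) * (8 * (1 + t) * b ^ 2 + 2 * t ^ 2) = 0 := by
        linear_combination -hJ + t ^ 2 * hM
      simpa [h2a] using this
    have : b ^ 6 = 0 := by linear_combination hH + (1 / 2 : K) * hN
    simp [hb] at this

theorem factor_mul_ne (ht0 : t ≠ 0) (ht1 : 1 + t ≠ 0) {p r s w : K[X]}
    (h₃ : p + s = C t * X) (h₂ : r + w + p * s = 0) (h₁ : p * w + r * s = C t) :
    r * w ≠ C (1 + t) * (X ^ 4 + 1) := by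
  intro h₀
  obtain rfl : s = C t * X - p := by linear_combination h₃
  obtain ⟨hp, hr, hw⟩ := natDegree_le_of_factor ht1 h₂ h₁ h₀
  obtain ⟨a, b, rfl⟩ := exists_eq_X_add_C_of_natDegree_le_one hp
  obtain ⟨r₂, r₁, r₀, rfl⟩ : ∃ r₂ r₁ r₀, r = C r₂ * X ^ 2 + C r₁ * X + C r₀ :=
    ⟨_, _, _, eq_C_mul_X_sq_add_C_mul_X_add_C_of_natDegree_le_two hr⟩
  obtain ⟨w₂, w₁, w₀, rfl⟩ : ∃ w₂ w₁ w₀, w = C w₂ * X ^ 2 + C w₁ * X + C w₀ :=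
    ⟨_, _, _, eq_C_mul_X_sq_add_C_mul_X_add_C_of_natDegree_le_two hw⟩
  have c₂ : C 0 * X ^ 4 + C 0 * X ^ 3 + C (r₂ + w₂ + a * (t - a)) * X ^ 2
      + C (r₁ + w₁ - a * b + b * (t - a)) * X + C (r₀ + w₀ - b ^ 2) = 0 := by
    simp only [map_add, map_sub, map_mul, map_pow, map_zero] at h₂ ⊢
    linear_combination h₂
  have c₁ : C 0 * X ^ 4 + C (a * w₂ + r₂ * (t - a)) * X ^ 3
      + C (a * w₁ + b * w₂ + r₁ * (t - a) - r₂ * b) * X ^ 2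
      + C (a * w₀ + b * w₁ + r₀ * (t - a) - r₁ * b) * X + C (b * w₀ - r₀ * b - t) = 0 := by
    simp only [map_add, map_sub, map_mul, map_zero] at h₁ ⊢
    linear_combination h₁
  have c₀ : C (r₂ * w₂ - (1 + t)) * X ^ 4 + C (r₂ * w₁ + r₁ * w₂) * X ^ 3
      + C (r₂ * w₀ + r₁ * w₁ + r₀ * w₂) * X ^ 2
      + C (r₁ * w₀ + r₀ * w₁) * X + C (r₀ * w₀ - (1 + t)) = 0 := by
    simp only [map_add, map_sub, map_mul, map_one] at h₀ ⊢
    linear_combination h₀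
  obtain ⟨-, -, h₂₂, h₂₁, h₂₀⟩ := coeffs_eq_zero_of_quartic_eq_zero c₂
  obtain ⟨-, h₁₃, -, h₁₁, h₁₀⟩ := coeffs_eq_zero_of_quartic_eq_zero c₁
  obtain ⟨h₀₄, h₀₃, -, h₀₁, h₀₀⟩ := coeffs_eq_zero_of_quartic_eq_zero c₀
  exact false_of_factor_equations ht0 ht1 h₂₂ h₂₁ h₂₀ h₁₃ h₁₁ h₁₀ h₀₄ h₀₃ h₀₁ h₀₀

end QuarticPencil

open MvPolynomial in
theorem irreducible_quartic_pencil {K : Type*} [Field K] [CharZero K] {t : K} (ht0 : t ≠ 0)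
    (ht1 : 1 + t ≠ 0) :
    Irreducible (X 0 ^ 4 + X 1 ^ 4 + 1 + C t * (X 0 ^ 4 + X 0 * X 1 ^ 3 + X 1 + 1) :
      MvPolynomial (Fin 2) K) := by
  have h := Polynomial.irreducible_X_pow_four_add (c₃ := Polynomial.C t * Polynomial.X) (c₂ := 0)
    (c₁ := Polynomial.C t) (c₀ := Polynomial.C (1 + t) * (Polynomial.X ^ 4 + 1))
    (fun p hp => QuarticPencil.root_ne_zero ht0 ht1 p (by linear_combination hp))
    (fun _ _ _ _ h₃ h₂ h₁ => QuarticPencil.factor_mul_ne ht0 ht1 h₃ h₂ h₁)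
  convert h.map (Polynomial.Bivariate.equivMvPolynomial K) using 1
  simp only [map_add, map_mul, map_pow, map_one, map_zero,
    Polynomial.Bivariate.equivMvPolynomial_C_X, Polynomial.Bivariate.equivMvPolynomial_X,
    Polynomial.Bivariate.equivMvPolynomial_C_C]
  ring

open MvPolynomial

theorem stmt_13 :
    Irreducible (X 0 ^ 4 + X 1 ^ 4 + 1 +
        C (algebraMap (RatFunc ℚ) (AlgebraicClosure (RatFunc ℚ)) RatFunc.X) *
          (X 0 ^ 4 + X 0 * X 1 ^ 3 + X 1 + 1) :
      MvPolynomial (Fin 2) (AlgebraicClosure (RatFunc ℚ))) := by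
  have hX1 : (1 + RatFunc.X : RatFunc ℚ) ≠ 0 := by
    rw [← RatFunc.algebraMap_X, ← map_one (algebraMap (Polynomial ℚ) (RatFunc ℚ)), ← map_add]
    exact RatFunc.algebraMap_ne_zero (by simpa [add_comm] using Polynomial.X_add_C_ne_zero (1 : ℚ))
  refine irreducible_quartic_pencil ((map_ne_zero _).2 RatFunc.X_ne_zero) ?_
  rwa [← map_one (algebraMap (RatFunc ℚ) _), ← map_add, map_ne_zero]
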